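/- arXiv:2309.06519 — 3 statements merged into one kernel-verified Lean document; each statement's English description precedes it below -/
import Mathlib

section
/- The adherence-aware Bellman operator J is a contraction in the sup norm with modulus λ: for all bounded functions q₁, q₂ : X × U → ℝ, one has ‖J q₁ − J q₂‖∞ ≤ λ · ‖q₁ − q₂‖∞. -/
open Finset

/-- The adherence-aware Bellman operator `J`:
`(J q)(x,u) = θ · max_{u_r} ∑_{x'} P x u_r x' · (R x u_r + λ · q (x', u_r))
  + (1−θ) · ∑_{x'} P x (g_b x) x' · (R x (g_b x) + λ · q (x', g_b x))`. -/
noncomputable def adhJ {X U : Type*} [Fintype X] [Fintype U] [Nonempty U]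
    (P : X → U → X → ℝ) (R : X → U → ℝ) (lam θ : ℝ) (gb : X → U)
    (q : X × U → ℝ) : X × U → ℝ :=
  fun p =>
    θ * (Finset.univ.sup' Finset.univ_nonempty fun ur : U =>
        ∑ x' : X, P p.1 ur x' * (R p.1 ur + lam * q (x', ur)))
    + (1 - θ) * ∑ x' : X, P p.1 (gb p.1) x' * (R p.1 (gb p.1) + lam * q (x', gb p.1))

lemma abs_sup'_sub_sup'_le' {U : Type*} [Fintype U] [Nonempty U]
    (f g : U → ℝ) (c : ℝ) (h : ∀ u, |f u - g u| ≤ c) :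
    |Finset.univ.sup' Finset.univ_nonempty f - Finset.univ.sup' Finset.univ_nonempty g| ≤ c := by
  rw [abs_sub_le_iff]
  constructor <;>
  · rw [sub_le_iff_le_add]
    apply Finset.sup'_le
    intro u _
    first
      | (calc f u ≤ g u + c := by cases abs_sub_le_iff.mp (h u); linarith
          _ ≤ Finset.univ.sup' Finset.univ_nonempty g + c := by
              have := Finset.le_sup' g (Finset.mem_univ u); linarith
          _ = c + Finset.univ.sup' Finset.univ_nonempty g := add_comm _ _)
      | (calc g u ≤ f u + c := by cases abs_sub_le_iff.mp (h u); linarith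
          _ ≤ Finset.univ.sup' Finset.univ_nonempty f + c := by
              have := Finset.le_sup' f (Finset.mem_univ u); linarith
          _ = c + Finset.univ.sup' Finset.univ_nonempty f := add_comm _ _)

/-- the adherence-aware Bellman operator is a `λ`-contraction in the sup norm. -/
theorem adhJ_contraction {X U : Type*} [Fintype X] [Nonempty X] [Fintype U] [Nonempty U]
    (P : X → U → X → ℝ) (R : X → U → ℝ) (lam θ : ℝ) (gb : X → U)
    (hP0 : ∀ x u x', 0 ≤ P x u x') (hP1 : ∀ x u, ∑ x' : X, P x u x' = 1)
    (hlam : lam ∈ Set.Ioo (0 : ℝ) 1) (hθ : θ ∈ Set.Icc (0 : ℝ) 1) :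
    ∀ q₁ q₂ : X × U → ℝ,
      ‖adhJ P R lam θ gb q₁ - adhJ P R lam θ gb q₂‖ ≤ lam * ‖q₁ - q₂‖ := by
  intro q₁ q₂
  obtain ⟨hl0, hl1⟩ := hlam
  obtain ⟨hθ0, hθ1⟩ := hθ
  have hnn : 0 ≤ lam * ‖q₁ - q₂‖ := by positivity
  -- pointwise bound on sums
  have key : ∀ (x : X) (u : U),
      |(∑ x' : X, P x u x' * (R x u + lam * q₁ (x', u)))
        - ∑ x' : X, P x u x' * (R x u + lam * q₂ (x', u))| ≤ lam * ‖q₁ - q₂‖ := by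
    intro x u
    rw [← Finset.sum_sub_distrib]
    calc |∑ x' : X, (P x u x' * (R x u + lam * q₁ (x', u))
            - P x u x' * (R x u + lam * q₂ (x', u)))|
        ≤ ∑ x' : X, |P x u x' * (R x u + lam * q₁ (x', u))
            - P x u x' * (R x u + lam * q₂ (x', u))| := Finset.abs_sum_le_sum_abs _ _
      _ ≤ ∑ x' : X, P x u x' * (lam * ‖q₁ - q₂‖) := by
          apply Finset.sum_le_sum
          intro x' _
          have : P x u x' * (R x u + lam * q₁ (x', u))
              - P x u x' * (R x u + lam * q₂ (x', u))
              = P x u x' * (lam * (q₁ (x', u) - q₂ (x', u))) := by ring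
          rw [this, abs_mul, abs_of_nonneg (hP0 x u x'), abs_mul,
            abs_of_nonneg hl0.le]
          have hb : |q₁ (x', u) - q₂ (x', u)| ≤ ‖q₁ - q₂‖ := by
            have := norm_le_pi_norm (q₁ - q₂) (x', u)
            simpa using this
          have := mul_le_mul_of_nonneg_left hb hl0.le
          nlinarith [hP0 x u x']
      _ = lam * ‖q₁ - q₂‖ := by rw [← Finset.sum_mul, hP1, one_mul]
  rw [show (lam * ‖q₁ - q₂‖) = ‖q₁ - q₂‖ * lam from mul_comm _ _] at *
  apply pi_norm_le_iff_of_nonneg (by positivity) |>.mpr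
  intro p
  obtain ⟨x, u⟩ := p
  simp only [Pi.sub_apply, adhJ, Real.norm_eq_abs]
  have h1 := abs_sup'_sub_sup'_le'
    (fun ur => ∑ x' : X, P x ur x' * (R x ur + lam * q₁ (x', ur)))
    (fun ur => ∑ x' : X, P x ur x' * (R x ur + lam * q₂ (x', ur)))
    (‖q₁ - q₂‖ * lam) (fun ur => key x ur)
  have h2 := key x (gb x)
  set A₁ := Finset.univ.sup' Finset.univ_nonempty
    (fun ur => ∑ x' : X, P x ur x' * (R x ur + lam * q₁ (x', ur)))
  set A₂ := Finset.univ.sup' Finset.univ_nonempty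
    (fun ur => ∑ x' : X, P x ur x' * (R x ur + lam * q₂ (x', ur)))
  set B₁ := ∑ x' : X, P x (gb x) x' * (R x (gb x) + lam * q₁ (x', gb x))
  set B₂ := ∑ x' : X, P x (gb x) x' * (R x (gb x) + lam * q₂ (x', gb x))
  calc |θ * A₁ + (1 - θ) * B₁ - (θ * A₂ + (1 - θ) * B₂)|
      = |θ * (A₁ - A₂) + (1 - θ) * (B₁ - B₂)| := by ring_nf
    _ ≤ |θ * (A₁ - A₂)| + |(1 - θ) * (B₁ - B₂)| := abs_add_le _ _
    _ ≤ θ * (‖q₁ - q₂‖ * lam) + (1 - θ) * (‖q₁ - q₂‖ * lam) := by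
        apply add_le_add
        · rw [abs_mul, abs_of_nonneg hθ0]
          exact mul_le_mul_of_nonneg_left h1 hθ0
        · rw [abs_mul, abs_of_nonneg (show (0:ℝ) ≤ 1 - θ by linarith)]
          exact mul_le_mul_of_nonneg_left h2 (by linarith)
    _ = ‖q₁ - q₂‖ * lam := by ring
end

section
/- The adherence-aware Bellman operator J admits a unique fixed point: there exists exactly one function Q∞ : X × U → ℝ with J Q∞ = Q∞. -/
open Finset

/-- the adherence-aware Bellman operator admits a unique fixed point. -/
theorem adhJ_unique_fixed_point {X U : Type*} [Fintype X] [Nonempty X] [Fintype U] [Nonempty U]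
    (P : X → U → X → ℝ) (R : X → U → ℝ) (lam θ : ℝ) (gb : X → U)
    (hP0 : ∀ x u x', 0 ≤ P x u x') (hP1 : ∀ x u, ∑ x' : X, P x u x' = 1)
    (hlam : lam ∈ Set.Ioo (0 : ℝ) 1) (hθ : θ ∈ Set.Icc (0 : ℝ) 1) :
    ∃! Qinf : X × U → ℝ, adhJ P R lam θ gb Qinf = Qinf := by
  obtain ⟨hl0, hl1⟩ := hlam
  obtain ⟨hθ0, hθ1⟩ := hθ
  set K : NNReal := ⟨lam, hl0.le⟩ with hKdef
  have hK1 : K < 1 := by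
    rw [← NNReal.coe_lt_coe]; exact hl1
  have hlip : LipschitzWith K (adhJ P R lam θ gb) := by
    apply LipschitzWith.of_dist_le_mul
    intro q1 q2
    have hD0 : (0:ℝ) ≤ dist q1 q2 := dist_nonneg
    have hKc : (K : ℝ) = lam := rfl
    rw [dist_pi_le_iff (by positivity)]
    intro p
    -- key bound for each action
    have key : ∀ u : U, |(∑ x' : X, P p.1 u x' * (R p.1 u + lam * q1 (x', u)))
        - ∑ x' : X, P p.1 u x' * (R p.1 u + lam * q2 (x', u))| ≤ lam * dist q1 q2 := by
      intro u
      rw [← Finset.sum_sub_distrib]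
      calc |∑ x' : X, (P p.1 u x' * (R p.1 u + lam * q1 (x', u))
              - P p.1 u x' * (R p.1 u + lam * q2 (x', u)))|
          ≤ ∑ x' : X, |P p.1 u x' * (R p.1 u + lam * q1 (x', u))
              - P p.1 u x' * (R p.1 u + lam * q2 (x', u))| :=
            Finset.abs_sum_le_sum_abs _ _
        _ ≤ ∑ x' : X, P p.1 u x' * (lam * dist q1 q2) := by
            apply Finset.sum_le_sum
            intro x' _
            have h1 : P p.1 u x' * (R p.1 u + lam * q1 (x', u))
                - P p.1 u x' * (R p.1 u + lam * q2 (x', u))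
                = (P p.1 u x' * lam) * (q1 (x', u) - q2 (x', u)) := by ring
            rw [h1, abs_mul, abs_of_nonneg (mul_nonneg (hP0 _ _ _) hl0.le), mul_assoc]
            apply mul_le_mul_of_nonneg_left _ (hP0 _ _ _)
            apply mul_le_mul_of_nonneg_left _ hl0.le
            have := dist_le_pi_dist q1 q2 (x', u)
            rwa [Real.dist_eq] at this
        _ = lam * dist q1 q2 := by
            rw [← Finset.sum_mul, hP1, one_mul]
    -- sup' bound
    set f1 : U → ℝ := fun u => ∑ x' : X, P p.1 u x' * (R p.1 u + lam * q1 (x', u)) with hf1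
    set f2 : U → ℝ := fun u => ∑ x' : X, P p.1 u x' * (R p.1 u + lam * q2 (x', u)) with hf2
    have hsup : |Finset.univ.sup' Finset.univ_nonempty f1
        - Finset.univ.sup' Finset.univ_nonempty f2| ≤ lam * dist q1 q2 := by
      rw [abs_sub_le_iff]
      constructor
      · rw [sub_le_iff_le_add]
        apply Finset.sup'_le
        intro u _
        have h := key u
        have h2 : f2 u ≤ Finset.univ.sup' Finset.univ_nonempty f2 :=
          Finset.le_sup' f2 (Finset.mem_univ u)
        have := (abs_sub_le_iff.mp h).1
        linarith
      · rw [sub_le_iff_le_add]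
        apply Finset.sup'_le
        intro u _
        have h := key u
        have h2 : f1 u ≤ Finset.univ.sup' Finset.univ_nonempty f1 :=
          Finset.le_sup' f1 (Finset.mem_univ u)
        have := (abs_sub_le_iff.mp h).2
        linarith
    have hb := key (gb p.1)
    have : dist (adhJ P R lam θ gb q1 p) (adhJ P R lam θ gb q2 p) ≤ lam * dist q1 q2 := by
      rw [Real.dist_eq]
      simp only [adhJ]
      have hrw : θ * Finset.univ.sup' Finset.univ_nonempty f1
            + (1 - θ) * (∑ x' : X, P p.1 (gb p.1) x' * (R p.1 (gb p.1) + lam * q1 (x', gb p.1)))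
          - (θ * Finset.univ.sup' Finset.univ_nonempty f2
            + (1 - θ) * (∑ x' : X, P p.1 (gb p.1) x' * (R p.1 (gb p.1) + lam * q2 (x', gb p.1))))
          = θ * (Finset.univ.sup' Finset.univ_nonempty f1 - Finset.univ.sup' Finset.univ_nonempty f2)
            + (1 - θ) * ((∑ x' : X, P p.1 (gb p.1) x' * (R p.1 (gb p.1) + lam * q1 (x', gb p.1)))
              - ∑ x' : X, P p.1 (gb p.1) x' * (R p.1 (gb p.1) + lam * q2 (x', gb p.1))) := by ring
      rw [hrw]
      calc |θ * (Finset.univ.sup' Finset.univ_nonempty f1 - Finset.univ.sup' Finset.univ_nonempty f2)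
            + (1 - θ) * ((∑ x' : X, P p.1 (gb p.1) x' * (R p.1 (gb p.1) + lam * q1 (x', gb p.1)))
              - ∑ x' : X, P p.1 (gb p.1) x' * (R p.1 (gb p.1) + lam * q2 (x', gb p.1)))|
          ≤ θ * |Finset.univ.sup' Finset.univ_nonempty f1 - Finset.univ.sup' Finset.univ_nonempty f2|
            + (1 - θ) * |(∑ x' : X, P p.1 (gb p.1) x' * (R p.1 (gb p.1) + lam * q1 (x', gb p.1)))
              - ∑ x' : X, P p.1 (gb p.1) x' * (R p.1 (gb p.1) + lam * q2 (x', gb p.1))| := by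
            calc _ ≤ |θ * _| + |(1 - θ) * _| := abs_add_le _ _
              _ = _ := by
                  rw [abs_mul, abs_mul, abs_of_nonneg hθ0, abs_of_nonneg (by linarith : (0:ℝ) ≤ 1 - θ)]
        _ ≤ θ * (lam * dist q1 q2) + (1 - θ) * (lam * dist q1 q2) := by
            apply add_le_add
            · exact mul_le_mul_of_nonneg_left hsup hθ0
            · exact mul_le_mul_of_nonneg_left hb (by linarith)
        _ = lam * dist q1 q2 := by ring
    rw [hKc]
    exact this
  have hC : ContractingWith K (adhJ P R lam θ gb) := ⟨hK1, hlip⟩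
  refine ⟨hC.fixedPoint, hC.fixedPoint_isFixedPt, fun y hy => hC.fixedPoint_unique hy⟩
end

section
/- The variance of the adherence-aware Q-learning noise term is bounded quadratically in the error: suppose |R x u| ≤ C_R for all x ∈ X, u ∈ U, let Q* : X × U → ℝ be the fixed point of J, let q : X × U → ℝ, and fix x ∈ X, u ∈ U, θ' ∈ [0,1]. Define f : X → ℝ by f(x') = θ' · max_{u_r ∈ U} (R x u_r + λ · q(x', u_r)) + (1−θ') · (R x (g_b x) + λ · q(x', g_b x)) − Q*(x,u). Then for every probability mass function p on X (p x' ≥ 0, ∑_{x'} p x' = 1), the variance ∑_{x'} p x' · f(x')² − (∑_{x'} p x' · f(x'))² is at most C · (1 + ‖q − Q*‖∞)², where C = (C_R + (1+λ) · ‖Q*‖∞ + λ)². -/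
open Finset

/-! The noise term is bounded pointwise by `C_R + λ‖q‖∞ + ‖Q*‖∞`, since the maximum and the
convex combination of quantities bounded by `C_R + λ‖q‖∞` are bounded by it as well, and
`‖q‖∞ ≤ ‖q − Q*‖∞ + ‖Q*‖∞`. A variance is at most the second moment, hence at most the
square of a pointwise bound, and this square is dominated by the claimed quadratic. -/

theorem variance_le_sq_of_abs_le {ι : Type*} (s : Finset ι) {p f : ι → ℝ} {M : ℝ}
    (hp0 : ∀ i ∈ s, 0 ≤ p i) (hp1 : ∑ i ∈ s, p i = 1) (hf : ∀ i ∈ s, |f i| ≤ M) :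
    (∑ i ∈ s, p i * f i ^ 2) - (∑ i ∈ s, p i * f i) ^ 2 ≤ M ^ 2 := by
  have second_moment : ∑ i ∈ s, p i * f i ^ 2 ≤ M ^ 2 :=
    calc ∑ i ∈ s, p i * f i ^ 2 ≤ ∑ i ∈ s, p i * M ^ 2 :=
          sum_le_sum fun i hi => mul_le_mul_of_nonneg_left (sq_le_sq' (abs_le.mp (hf i hi)).1
            (abs_le.mp (hf i hi)).2) (hp0 i hi)
      _ = M ^ 2 := by rw [← sum_mul, hp1, one_mul]
  nlinarith [sq_nonneg (∑ i ∈ s, p i * f i)]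

theorem abs_sup'_le {ι : Type*} {s : Finset ι} (hs : s.Nonempty) {g : ι → ℝ} {B : ℝ}
    (hg : ∀ i ∈ s, |g i| ≤ B) : |s.sup' hs g| ≤ B := by
  obtain ⟨i, hi⟩ := hs
  refine abs_le.mpr ⟨?_, sup'_le _ _ fun j hj => (abs_le.mp (hg j hj)).2⟩
  exact (abs_le.mp (hg i hi)).1.trans (le_sup' g hi)

theorem abs_convex_combination_le {a b θ B : ℝ} (hθ : θ ∈ Set.Icc (0 : ℝ) 1)
    (ha : |a| ≤ B) (hb : |b| ≤ B) : |θ * a + (1 - θ) * b| ≤ B := by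
  obtain ⟨hθ0, hθ1⟩ := hθ
  calc |θ * a + (1 - θ) * b| ≤ θ * |a| + (1 - θ) * |b| := by
        refine (abs_add_le _ _).trans_eq ?_
        rw [abs_mul, abs_mul, abs_of_nonneg hθ0, abs_of_nonneg (sub_nonneg.mpr hθ1)]
    _ ≤ θ * B + (1 - θ) * B := by gcongr
    _ = B := by ring

theorem abs_apply_le_norm_sub_add_norm {ι : Type*} [Fintype ι] (q Q : ι → ℝ) (i : ι) :
    |q i| ≤ ‖q - Q‖ + ‖Q‖ :=
  calc |q i| = ‖q i‖ := (Real.norm_eq_abs _).symm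
    _ ≤ ‖q‖ := norm_le_pi_norm q i
    _ ≤ ‖q - Q‖ + ‖Q‖ := by rw [add_comm]; exact norm_le_norm_add_norm_sub' q Q

theorem adhJ_noise_variance_bound_general {X U : Type*}
    [Fintype X] [Fintype U] [Nonempty U]
    (R : X → U → ℝ) (lam : ℝ) (gb : X → U)
    (hlam : lam ∈ Set.Ioo (0 : ℝ) 1)
    (C_R : ℝ) (hR : ∀ x u, |R x u| ≤ C_R)
    (Qstar : X × U → ℝ)
    (q : X × U → ℝ) (x : X) (u : U) (θ' : ℝ) (hθ' : θ' ∈ Set.Icc (0 : ℝ) 1)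
    (f : X → ℝ)
    (hf : ∀ x' : X, f x' =
      θ' * (Finset.univ.sup' Finset.univ_nonempty fun ur : U => R x ur + lam * q (x', ur))
        + (1 - θ') * (R x (gb x) + lam * q (x', gb x)) - Qstar (x, u))
    (p : X → ℝ) (hp0 : ∀ x', 0 ≤ p x') (hp1 : ∑ x' : X, p x' = 1) :
    (∑ x' : X, p x' * (f x') ^ 2) - (∑ x' : X, p x' * f x') ^ 2 ≤
      (C_R + (1 + lam) * ‖Qstar‖ + lam) ^ 2 * (1 + ‖q - Qstar‖) ^ 2 := by
  set D := ‖q - Qstar‖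
  set B := C_R + lam * (D + ‖Qstar‖)
  have hlam0 : 0 ≤ lam := hlam.1.le
  have hCR : 0 ≤ C_R := (abs_nonneg _).trans (hR x u)
  have hterm : ∀ x' ur, |R x ur + lam * q (x', ur)| ≤ B := fun x' ur =>
    calc |R x ur + lam * q (x', ur)| ≤ |R x ur| + lam * |q (x', ur)| :=
          (abs_add_le _ _).trans_eq (by rw [abs_mul, abs_of_nonneg hlam0])
      _ ≤ B := add_le_add (hR x ur)
            (mul_le_mul_of_nonneg_left (abs_apply_le_norm_sub_add_norm q Qstar _) hlam0)
  have hf_le : ∀ x', |f x'| ≤ B + ‖Qstar‖ := fun x' => by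
    rw [hf x']
    refine (abs_sub _ _).trans (add_le_add ?_ (norm_le_pi_norm Qstar (x, u)))
    exact abs_convex_combination_le hθ' (abs_sup'_le _ fun ur _ => hterm x' ur) (hterm x' (gb x))
  refine (variance_le_sq_of_abs_le univ (fun i _ => hp0 i) hp1 fun i _ => hf_le i).trans ?_
  have hD : 0 ≤ D := norm_nonneg _
  have hQ : 0 ≤ ‖Qstar‖ := norm_nonneg _
  have hlam_le : lam ≤ C_R + (1 + lam) * ‖Qstar‖ + lam := le_add_of_nonneg_left (by positivity)
  rw [← mul_pow]
  refine pow_le_pow_left₀ (by positivity) ?_ 2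
  calc B + ‖Qstar‖ = C_R + (1 + lam) * ‖Qstar‖ + lam * D := by ring
    _ ≤ (C_R + (1 + lam) * ‖Qstar‖ + lam) * (1 + D) := by
        nlinarith [mul_le_mul_of_nonneg_right hlam_le hD]

/-- the variance of the adherence-aware Q-learning noise term is bounded
quadratically in the error `‖q − Q*‖∞`. -/
theorem adhJ_noise_variance_bound {X U : Type*}
    [Fintype X] [Nonempty X] [Fintype U] [Nonempty U]
    (P : X → U → X → ℝ) (R : X → U → ℝ) (lam θ : ℝ) (gb : X → U)
    (hP0 : ∀ x u x', 0 ≤ P x u x') (hP1 : ∀ x u, ∑ x' : X, P x u x' = 1)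
    (hlam : lam ∈ Set.Ioo (0 : ℝ) 1) (hθ : θ ∈ Set.Icc (0 : ℝ) 1)
    (C_R : ℝ) (hR : ∀ x u, |R x u| ≤ C_R)
    (Qstar : X × U → ℝ) (hfix : adhJ P R lam θ gb Qstar = Qstar)
    (q : X × U → ℝ) (x : X) (u : U) (θ' : ℝ) (hθ' : θ' ∈ Set.Icc (0 : ℝ) 1)
    (f : X → ℝ)
    (hf : ∀ x' : X, f x' =
      θ' * (Finset.univ.sup' Finset.univ_nonempty fun ur : U => R x ur + lam * q (x', ur))
        + (1 - θ') * (R x (gb x) + lam * q (x', gb x)) - Qstar (x, u))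
    (p : X → ℝ) (hp0 : ∀ x', 0 ≤ p x') (hp1 : ∑ x' : X, p x' = 1) :
    (∑ x' : X, p x' * (f x') ^ 2) - (∑ x' : X, p x' * f x') ^ 2 ≤
      (C_R + (1 + lam) * ‖Qstar‖ + lam) ^ 2 * (1 + ‖q - Qstar‖) ^ 2 :=
  adhJ_noise_variance_bound_general R lam gb hlam C_R hR Qstar q x u θ' hθ' f hf p hp0 hp1
end
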